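/- Let k, k′ > 0, m ∈ ℤ, and let σ : ℝ → ℂ be measurable. Let r = (x, y), r′ = (x′, y′) and r_c′ = (x_c′, y_c′) be points of ℝ², and let (ρ_c′, θ_c′) be the polar coordinates of r′ − r_c′. Assume that for each n ∈ ℤ the function λ ↦ 𝓔^{kk′}(x − x_c′, y, y_c′)·ω(λ,k)^m·ω(λ,k′)^n·σ(λ) is integrable on ℝ, and that Σ_{n∈ℤ} |J_n(k′ρ_c′)|·∫_ℝ |𝓔^{kk′}(x − x_c′, y, y_c′)·ω(λ,k)^m·ω(λ,k′)^n·σ(λ)| dλ < ∞. Then the integral 𝓘^{kk′}_{m0}(x − x′, y, y′, σ) exists and 𝓘^{kk′}_{m0}(x − x′, y, y′, σ) = Σ_{n∈ℤ} (−1)^n·J_n(k′ρ_c′)·e^{inθ_c′}·𝓘^{kk′}_{mn}(x − x_c′, y, y_c′, σ), the series on the right converging absolutely. -/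

import Mathlib

open Complex MeasureTheory Filter

/-- The branch of the vertical wavenumber: κ(λ,k) = √(k²−λ²) if |λ| ≤ k,
and κ(λ,k) = i√(λ²−k²) if |λ| > k. -/
noncomputable def kappa (lam k : ℝ) : ℂ :=
  if |lam| ≤ k then ((Real.sqrt (k ^ 2 - lam ^ 2) : ℝ) : ℂ)
  else Complex.I * ((Real.sqrt (lam ^ 2 - k ^ 2) : ℝ) : ℂ)

/-- ω(λ,k) = (κ(λ,k) + iλ)/k. -/
noncomputable def omega (lam k : ℝ) : ℂ := (kappa lam k + Complex.I * (lam : ℂ)) / (k : ℂ)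

/-- The plane-wave kernel 𝓔^{kk′}(x, y, y′) = exp(iλx + iκ(λ,k)y − iκ(λ,k′)y′). -/
noncomputable def pwKernel (k k' lam x y y' : ℝ) : ℂ :=
  Complex.exp (Complex.I * (lam : ℂ) * (x : ℂ) + Complex.I * kappa lam k * (y : ℂ)
    - Complex.I * kappa lam k' * (y' : ℂ))

/-- Bessel function of the first kind of nonnegative integer order, via its power series. -/
noncomputable def besselJnat (n : ℕ) (z : ℂ) : ℂ :=
  ∑' m : ℕ, ((-1 : ℂ) ^ m / ((m.factorial : ℂ) * ((m + n).factorial : ℂ))) * (z / 2) ^ (2 * m + n)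

/-- Bessel function of the first kind of integer order, with J_{−n} = (−1)^n J_n. -/
noncomputable def besselJ (n : ℤ) (z : ℂ) : ℂ :=
  if 0 ≤ n then besselJnat n.toNat z else (-1 : ℂ) ^ ((-n).toNat) * besselJnat ((-n).toNat) z

/-- Integrand of the Sommerfeld-type integral 𝓘^{kk′}_{nm}. -/
noncomputable def sommerfeldIntegrand (k k' : ℝ) (n m : ℤ) (x y y' : ℝ) (σ : ℝ → ℂ)
    (lam : ℝ) : ℂ :=
  pwKernel k k' lam x y y' * (omega lam k) ^ n * (omega lam k') ^ m * σ lam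

/-- The Sommerfeld-type integral 𝓘^{kk′}_{nm}(x, y, y′, σ). -/
noncomputable def sommerfeld (k k' : ℝ) (n m : ℤ) (x y y' : ℝ) (σ : ℝ → ℂ) : ℂ :=
  ∫ lam : ℝ, sommerfeldIntegrand k k' n m x y y' σ lam

def eZN : ℤ × ℕ ≃ ℕ × ℕ where
  toFun q := if 0 ≤ q.1 then (q.2 + q.1.toNat, q.2) else (q.2, q.2 + (-q.1).toNat)
  invFun p := ((p.1 : ℤ) - p.2, min p.1 p.2)
  left_inv q := by
    rcases q with ⟨n, m⟩
    by_cases h : 0 ≤ n <;> simp [h, Prod.ext_iff] <;> omega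
  right_inv p := by
    rcases p with ⟨a, b⟩
    by_cases h : 0 ≤ (a:ℤ) - b <;> simp [h, Prod.ext_iff] <;> split_ifs <;> omega

lemma exp_tsum' (w : ℂ) : Complex.exp w = ∑' n : ℕ, w ^ n / n.factorial := by
  rw [Complex.exp_eq_exp_ℂ, NormedSpace.exp_eq_tsum_div]

lemma summable_norm_exp (w : ℂ) : Summable fun a : ℕ => ‖w ^ a / (a.factorial : ℂ)‖ := by
  simpa [norm_div, norm_pow] using Real.summable_pow_div_factorial ‖w‖

set_option maxHeartbeats 1000000 in
lemma besselJ_gen (z t : ℂ) (ht : t ≠ 0) :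
    ∑' n : ℤ, besselJ n z * t ^ n = Complex.exp (z / 2 * (t - t⁻¹)) := by
  set u := z / 2 * t with hu
  set v := -(z / 2) * t⁻¹ with hv
  set G : ℕ × ℕ → ℂ := fun p => u ^ p.1 / p.1.factorial * (v ^ p.2 / p.2.factorial) with hG
  have hsumu := summable_norm_exp u
  have hsumv := summable_norm_exp v
  have hGsum : Summable G := by
    have h := summable_mul_of_summable_norm (f := fun a : ℕ => u ^ a / (a.factorial : ℂ))
      (g := fun b : ℕ => v ^ b / (b.factorial : ℂ)) hsumu hsumv
    exact h
  have hexp : Complex.exp (z / 2 * (t - t⁻¹)) = ∑' p : ℕ × ℕ, G p := by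
    rw [show z / 2 * (t - t⁻¹) = u + v by rw [hu, hv]; ring, Complex.exp_add,
      exp_tsum' u, exp_tsum' v]
    have h := tsum_mul_tsum_of_summable_norm (f := fun a : ℕ => u ^ a / (a.factorial : ℂ))
      (g := fun b : ℕ => v ^ b / (b.factorial : ℂ)) hsumu hsumv
    exact h
  have hcomp : Summable fun q : ℤ × ℕ => G (eZN q) := (Equiv.summable_iff eZN).2 hGsum
  rw [hexp, ← Equiv.tsum_eq eZN G, Summable.tsum_prod' hcomp (fun b => hcomp.prod_factor b)]
  apply tsum_congr
  intro n
  rcases le_or_gt 0 n with h | h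
  · have hterm : ∀ m : ℕ, G (eZN (n, m))
        = ((-1 : ℂ) ^ m / ((m.factorial : ℂ) * ((m + n.toNat).factorial : ℂ))
            * (z / 2) ^ (2 * m + n.toNat)) * t ^ n.toNat := by
      intro m
      set p := n.toNat
      have htp : t ^ (m + p) * (t⁻¹) ^ m = t ^ p := by
        rw [inv_pow, pow_add, mul_comm (t ^ m), mul_assoc,
          mul_inv_cancel₀ (pow_ne_zero _ ht), mul_one]
      have hkey : u ^ (m + p) * v ^ m = ((-1 : ℂ) ^ m * (z / 2) ^ (2 * m + p)) * t ^ p := by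
        rw [hu, hv, mul_pow,
          show (-(z / 2) * t⁻¹) ^ m = (-1 : ℂ) ^ m * ((z / 2) ^ m * (t⁻¹) ^ m) by
            rw [show -(z / 2) * t⁻¹ = -(z / 2 * t⁻¹) by ring, neg_pow, mul_pow],
          show 2 * m + p = (m + p) + m by ring, pow_add (z / 2), ← htp]
        ring
      simp only [hG, eZN, Equiv.coe_fn_mk, h, if_pos]
      show u ^ (m + p) / ((m + p).factorial : ℂ) * (v ^ m / (m.factorial : ℂ)) = _
      rw [div_mul_div_comm, hkey]
      ring
    rw [tsum_congr hterm, tsum_mul_right]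
    have hb : besselJ n z = besselJnat n.toNat z := by simp [besselJ, h]
    rw [hb, show (t : ℂ) ^ (n : ℤ) = t ^ n.toNat by
      rw [← zpow_natCast t n.toNat, Int.toNat_of_nonneg h]]
    rfl
  · have hterm : ∀ m : ℕ, G (eZN (n, m))
        = ((-1 : ℂ) ^ m / ((m.factorial : ℂ) * ((m + (-n).toNat).factorial : ℂ))
            * (z / 2) ^ (2 * m + (-n).toNat))
          * ((-1 : ℂ) ^ ((-n).toNat) * (t⁻¹) ^ ((-n).toNat)) := by
      intro m
      set p := (-n).toNat
      have htp : t ^ m * (t⁻¹) ^ (m + p) = (t⁻¹) ^ p := by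
        rw [pow_add, ← mul_assoc, inv_pow, mul_inv_cancel₀ (pow_ne_zero _ ht), one_mul]
      have hkey : u ^ m * v ^ (m + p)
          = ((-1 : ℂ) ^ m * (z / 2) ^ (2 * m + p)) * ((-1 : ℂ) ^ p * (t⁻¹) ^ p) := by
        rw [hu, hv, mul_pow,
          show (-(z / 2) * t⁻¹) ^ (m + p) = (-1 : ℂ) ^ (m + p) * ((z / 2) ^ (m + p) * (t⁻¹) ^ (m + p)) by
            rw [show -(z / 2) * t⁻¹ = -(z / 2 * t⁻¹) by ring, neg_pow, mul_pow],
          show 2 * m + p = (m + p) + m by ring, pow_add (z / 2), pow_add (-1 : ℂ), ← htp]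
        ring
      simp only [hG, eZN, Equiv.coe_fn_mk, not_le.2 h, if_neg, not_false_iff]
      show u ^ m / (m.factorial : ℂ) * (v ^ (m + p) / ((m + p).factorial : ℂ)) = _
      rw [div_mul_div_comm, hkey]
      ring
    rw [tsum_congr hterm, tsum_mul_right]
    have hb : besselJ n z = (-1 : ℂ) ^ ((-n).toNat) * besselJnat ((-n).toNat) z := by
      simp [besselJ, not_le.2 h]
    have htn : (t : ℂ) ^ (n : ℤ) = (t⁻¹) ^ ((-n).toNat) := by
      have he : n = -(((-n).toNat : ℕ) : ℤ) := by omega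
      conv_lhs => rw [he]
      rw [zpow_neg, zpow_natCast, inv_pow]
    rw [hb, htn]
    have hdef : (∑' (x : ℕ), ((-1 : ℂ) ^ x / ((x.factorial : ℂ) * (((x + (-n).toNat).factorial : ℕ) : ℂ)))
        * (z / 2) ^ (2 * x + (-n).toNat)) = besselJnat ((-n).toNat) z := rfl
    rw [hdef]
    ring

section Aux

lemma kappa_sq (lam k : ℝ) (hk : 0 ≤ k) : kappa lam k ^ 2 = (k : ℂ) ^ 2 - (lam : ℂ) ^ 2 := by
  unfold kappa
  split_ifs with h
  · rw [← Complex.ofReal_pow, Real.sq_sqrt (by nlinarith [abs_le.mp h] : (0:ℝ) ≤ k ^ 2 - lam ^ 2)]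
    push_cast; ring
  · rw [mul_pow, Complex.I_sq, ← Complex.ofReal_pow,
      Real.sq_sqrt (by nlinarith [le_of_not_ge h, abs_nonneg lam, _root_.sq_abs lam] :
        (0:ℝ) ≤ lam ^ 2 - k ^ 2)]
    push_cast; ring

lemma omega_mul (lam k : ℝ) (hk : 0 < k) :
    omega lam k * ((kappa lam k - Complex.I * lam) / k) = 1 := by
  have hk0 : (k : ℂ) ≠ 0 := Complex.ofReal_ne_zero.2 hk.ne'
  have h := kappa_sq lam k hk.le
  simp only [omega]
  field_simp
  linear_combination h - Complex.I_sq * (lam : ℂ) ^ 2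

lemma omega_ne_zero (lam k : ℝ) (hk : 0 < k) : omega lam k ≠ 0 :=
  left_ne_zero_of_mul_eq_one (omega_mul lam k hk)

lemma measurable_kappa (k : ℝ) : Measurable fun lam => kappa lam k := by
  unfold kappa
  apply Measurable.ite
  · exact measurableSet_le (continuous_abs.measurable) measurable_const
  · exact (Complex.continuous_ofReal.comp (Real.continuous_sqrt.comp (by continuity))).measurable
  · exact (Continuous.mul continuous_const
      (Complex.continuous_ofReal.comp (Real.continuous_sqrt.comp (by continuity)))).measurable

lemma measurable_omega (k : ℝ) : Measurable fun lam => omega lam k := by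
  unfold omega
  exact ((measurable_kappa k).add ((measurable_const).mul Complex.measurable_ofReal)).div
    measurable_const

lemma measurable_zpowf {f : ℝ → ℂ} (hf : Measurable f) (n : ℤ) : Measurable fun x => f x ^ n := by
  rcases n with j | j
  · simpa using hf.pow_const j
  · simpa [zpow_negSucc] using hf.pow_const (j + 1)

lemma measurable_sommerfeldIntegrand (k k' : ℝ) (n m : ℤ) (x y y' : ℝ) {σ : ℝ → ℂ}
    (hσ : Measurable σ) : Measurable (sommerfeldIntegrand k k' n m x y y' σ) := by
  unfold sommerfeldIntegrand pwKernel
  refine (((Measurable.mul ?_ (measurable_zpowf (measurable_omega k) n)).mul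
    (measurable_zpowf (measurable_omega k') m)).mul hσ)
  exact (Complex.continuous_exp.measurable).comp
    ((((measurable_const.mul Complex.measurable_ofReal).mul measurable_const).add
      ((measurable_const.mul (measurable_kappa k)).mul measurable_const)).sub
      ((measurable_const.mul (measurable_kappa k')).mul measurable_const))

end Aux

/-- local expansion of the Sommerfeld-type integral 𝓘^{kk′}_{m0} about a
center r_c′ near the source r′. Under the stated integrability and summability hypotheses,
𝓘^{kk′}_{m0}(x−x′, y, y′, σ) exists and equals the absolutely convergent series
Σ_{n∈ℤ} (−1)^n J_n(k′ρ_c′) e^{inθ_c′} 𝓘^{kk′}_{mn}(x−x_c′, y, y_c′, σ). -/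
theorem sommerfeld_local_expansion
    (k k' : ℝ) (hk : 0 < k) (hk' : 0 < k') (m : ℤ) (σ : ℝ → ℂ) (hσ : Measurable σ)
    (x y x' y' xc' yc' ρc' θc' : ℝ)
    (hρc' : 0 ≤ ρc')
    (hxc' : x' - xc' = ρc' * Real.cos θc') (hyc' : y' - yc' = ρc' * Real.sin θc')
    (hint : ∀ n : ℤ, MeasureTheory.Integrable
      (sommerfeldIntegrand k k' m n (x - xc') y yc' σ))
    (hsum : Summable (fun n : ℤ => ‖besselJ n ((k' * ρc' : ℝ) : ℂ)‖
      * ∫ lam : ℝ, ‖sommerfeldIntegrand k k' m n (x - xc') y yc' σ lam‖)) :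
    MeasureTheory.Integrable (sommerfeldIntegrand k k' m 0 (x - x') y y' σ) ∧
    Summable (fun n : ℤ =>
      ‖(-1 : ℂ) ^ n * besselJ n ((k' * ρc' : ℝ) : ℂ)
        * Complex.exp (Complex.I * (n : ℂ) * (θc' : ℂ))
        * sommerfeld k k' m n (x - xc') y yc' σ‖) ∧
    sommerfeld k k' m 0 (x - x') y y' σ
      = ∑' n : ℤ, (-1 : ℂ) ^ n * besselJ n ((k' * ρc' : ℝ) : ℂ)
          * Complex.exp (Complex.I * (n : ℂ) * (θc' : ℂ))
          * sommerfeld k k' m n (x - xc') y yc' σ := by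
  have hk'0 : (k' : ℂ) ≠ 0 := Complex.ofReal_ne_zero.2 hk'.ne'
  set z : ℂ := ((k' * ρc' : ℝ) : ℂ) with hz
  set c : ℤ → ℂ := fun n => (-1 : ℂ) ^ n * besselJ n z
    * Complex.exp (Complex.I * (n : ℂ) * (θc' : ℂ)) with hc
  set F : ℤ → ℝ → ℂ := fun n lam =>
    c n * sommerfeldIntegrand k k' m n (x - xc') y yc' σ lam with hF
  have hcnorm : ∀ n : ℤ, ‖c n‖ = ‖besselJ n z‖ := by
    intro n
    have h1 : ‖(-1 : ℂ) ^ n‖ = 1 := by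
      rw [norm_zpow]; simp
    have h2 : ‖Complex.exp (Complex.I * (n : ℂ) * (θc' : ℂ))‖ = 1 := by
      rw [Complex.norm_exp]
      simp [Complex.mul_re]
    simp only [hc, norm_mul, h1, h2, one_mul, mul_one]
  have hFint : ∀ n : ℤ, Integrable (F n) := fun n => (hint n).const_mul (c n)
  have hFnorm : ∀ n : ℤ, (∫ lam, ‖F n lam‖) = ‖besselJ n z‖
      * ∫ lam, ‖sommerfeldIntegrand k k' m n (x - xc') y yc' σ lam‖ := by
    intro n
    simp only [hF, norm_mul, hcnorm]
    exact integral_const_mul _ _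
  have hFsum : Summable fun n : ℤ => ∫ lam, ‖F n lam‖ := by
    simpa only [hFnorm] using hsum
  have homega' : ∀ lam : ℝ, omega lam k' ≠ 0 := fun lam => omega_ne_zero lam k' hk'
  have hpt : ∀ lam : ℝ,
      (∑' n : ℤ, F n lam) = sommerfeldIntegrand k k' m 0 (x - x') y y' σ lam := by
    intro lam
    set t : ℂ := -(Complex.exp (Complex.I * (θc' : ℂ)) * omega lam k') with htt
    have ht : t ≠ 0 := by
      simp only [htt, neg_ne_zero, mul_ne_zero_iff]
      exact ⟨Complex.exp_ne_zero _, homega' lam⟩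
    set A : ℂ := pwKernel k k' lam (x - xc') y yc' * (omega lam k) ^ m * σ lam with hA
    have hFn : ∀ n : ℤ, F n lam = A * (besselJ n z * t ^ n) := by
      intro n
      have htn : t ^ n = (-1 : ℂ) ^ n
          * (Complex.exp (Complex.I * (n : ℂ) * (θc' : ℂ)) * (omega lam k') ^ n) := by
        rw [htt, show -(Complex.exp (Complex.I * (θc' : ℂ)) * omega lam k')
            = (-1) * (Complex.exp (Complex.I * (θc' : ℂ)) * omega lam k') by ring,
          mul_zpow, mul_zpow, ← Complex.exp_int_mul,
          show (n : ℂ) * (Complex.I * (θc' : ℂ)) = Complex.I * (n : ℂ) * (θc' : ℂ) by ring]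
      simp only [hF, hA, sommerfeldIntegrand, hc]
      rw [htn]
      ring
    rw [tsum_congr hFn, tsum_mul_left, besselJ_gen z t ht]
    have hti : t⁻¹ = -(Complex.exp (-(Complex.I * (θc' : ℂ)))
        * ((kappa lam k' - Complex.I * lam) / k')) := by
      apply inv_eq_of_mul_eq_one_right
      have heq : t * -(Complex.exp (-(Complex.I * (θc' : ℂ)))
            * ((kappa lam k' - Complex.I * lam) / k'))
          = (Complex.exp (Complex.I * (θc' : ℂ)) * Complex.exp (-(Complex.I * (θc' : ℂ))))
            * (omega lam k' * ((kappa lam k' - Complex.I * lam) / k')) := by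
        rw [htt]; ring
      rw [heq, ← Complex.exp_add, add_neg_cancel, Complex.exp_zero, one_mul,
        omega_mul lam k' hk']
    have harg : z / 2 * (t - t⁻¹) = -(Complex.I * kappa lam k' * ((y' : ℂ) - (yc' : ℂ)))
        - Complex.I * (lam : ℂ) * ((x' : ℂ) - (xc' : ℂ)) := by
      have h1 : Complex.exp (Complex.I * (θc' : ℂ))
          = Complex.cos θc' + Complex.sin θc' * Complex.I := by
        rw [mul_comm, Complex.exp_mul_I]
      have h2 : Complex.exp (-(Complex.I * (θc' : ℂ)))
          = Complex.cos θc' - Complex.sin θc' * Complex.I := by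
        rw [show -(Complex.I * (θc' : ℂ)) = ((-θc' : ℝ) : ℂ) * Complex.I by push_cast; ring,
          Complex.exp_mul_I]
        push_cast
        rw [Complex.cos_neg, Complex.sin_neg]
        ring
      have hx : ((x' : ℂ) - (xc' : ℂ)) = (ρc' : ℂ) * Complex.cos (θc' : ℂ) := by
        rw [← Complex.ofReal_sub, hxc']
        push_cast [← Complex.ofReal_cos]
        ring
      have hy : ((y' : ℂ) - (yc' : ℂ)) = (ρc' : ℂ) * Complex.sin (θc' : ℂ) := by
        rw [← Complex.ofReal_sub, hyc']
        push_cast [← Complex.ofReal_sin]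
        ring
      rw [hti, htt, hx, hy, h1, h2, hz]
      unfold omega
      push_cast
      field_simp
      ring
    have hpw : pwKernel k k' lam (x - x') y y'
        = pwKernel k k' lam (x - xc') y yc' * Complex.exp (z / 2 * (t - t⁻¹)) := by
      rw [harg]
      unfold pwKernel
      rw [← Complex.exp_add]
      congr 1
      push_cast
      ring
    simp only [sommerfeldIntegrand, hA, zpow_zero, mul_one, hpw]
    ring
  have hmeas0 : Measurable (sommerfeldIntegrand k k' m 0 (x - x') y y' σ) :=
    measurable_sommerfeldIntegrand k k' m 0 (x - x') y y' hσ
  have hFaemeas : ∀ n : ℤ, AEMeasurable (fun lam => (‖F n lam‖₊ : ENNReal)) volume :=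
    fun n => (hFint n).aestronglyMeasurable.enorm
  have htop : (∑' n : ℤ, ∫⁻ lam, (‖F n lam‖₊ : ENNReal)) < ⊤ := by
    have heq : ∀ n : ℤ, (∫⁻ lam, (‖F n lam‖₊ : ENNReal))
        = ENNReal.ofReal (∫ lam, ‖F n lam‖) :=
      fun n => (ofReal_integral_norm_eq_lintegral_enorm (hFint n)).symm
    simp_rw [heq]
    rw [← ENNReal.ofReal_tsum_of_nonneg
      (fun n => integral_nonneg (fun _ => norm_nonneg _)) hFsum]
    exact ENNReal.ofReal_lt_top
  have hint0 : Integrable (sommerfeldIntegrand k k' m 0 (x - x') y y' σ) := by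
    refine ⟨hmeas0.aestronglyMeasurable, ?_⟩
    have hle : (∫⁻ lam, (‖sommerfeldIntegrand k k' m 0 (x - x') y y' σ lam‖₊ : ENNReal))
        ≤ ∑' n : ℤ, ∫⁻ lam, (‖F n lam‖₊ : ENNReal) := by
      rw [← lintegral_tsum hFaemeas]
      apply lintegral_mono
      intro lam
      simp only []
      rw [← hpt lam]
      by_cases hs : Summable fun n : ℤ => ‖F n lam‖₊
      · rw [← ENNReal.coe_tsum hs]
        exact_mod_cast nnnorm_tsum_le hs
      · rw [show (∑' n : ℤ, (‖F n lam‖₊ : ENNReal)) = ⊤ by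
          by_contra hcon
          exact hs (ENNReal.tsum_coe_ne_top_iff_summable.mp hcon)]
        exact le_top
    exact lt_of_le_of_lt hle htop
  refine ⟨hint0, ?_, ?_⟩
  · apply Summable.of_nonneg_of_le (fun n => norm_nonneg _) _ hsum
    intro n
    show ‖c n * sommerfeld k k' m n (x - xc') y yc' σ‖ ≤ _
    rw [norm_mul, hcnorm n]
    apply mul_le_mul_of_nonneg_left _ (norm_nonneg _)
    calc ‖sommerfeld k k' m n (x - xc') y yc' σ‖
        ≤ ∫ lam, ‖sommerfeldIntegrand k k' m n (x - xc') y yc' σ lam‖ :=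
          norm_integral_le_integral_norm _
      _ = _ := rfl
  · unfold sommerfeld
    calc (∫ lam, sommerfeldIntegrand k k' m 0 (x - x') y y' σ lam)
        = ∫ lam, ∑' n : ℤ, F n lam := by
          apply integral_congr_ae
          filter_upwards with lam
          exact (hpt lam).symm
      _ = ∑' n : ℤ, ∫ lam, F n lam :=
          (integral_tsum_of_summable_integral_norm hFint hFsum).symm
      _ = _ := by
          apply tsum_congr
          intro n
          show (∫ lam, c n * sommerfeldIntegrand k k' m n (x - xc') y yc' σ lam) = _
          rw [integral_const_mul]
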